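/- If m ≥ 1, then for every formula ψ, the logic NA_{m,n} does not prove ¬□ψ. -/

import Mathlib

inductive Formula : Type
  | bot : Formula
  | var : ℕ → Formula
  | neg : Formula → Formula
  | or : Formula → Formula → Formula
  | box : Formula → Formula
  deriving DecidableEq

namespace Formula

def imp (φ ψ : Formula) : Formula := .or (.neg φ) ψ

def and (φ ψ : Formula) : Formula := .neg (.or (.neg φ) (.neg ψ))

/-- □^n φ -/
def boxn : ℕ → Formula → Formula
  | 0, φ => φ
  | k+1, φ => .box (boxn k φ)

/-- the set of subformulas -/
def sub : Formula → Finset Formula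
  | .bot => {.bot}
  | .var p => {.var p}
  | .neg φ => insert (.neg φ) φ.sub
  | .or φ ψ => insert (.or φ ψ) (φ.sub ∪ ψ.sub)
  | .box φ => insert (.box φ) φ.sub

/-- ∼ρ -/
def negg : Formula → Formula
  | .neg φ => φ
  | φ => .neg φ

end Formula

def NSub (ψ : Formula) : Finset Formula := ψ.sub ∪ ψ.sub.image Formula.negg

/-- boolean evaluation treating boxed formulas and variables as atoms -/
def evalP (v : Formula → Bool) : Formula → Bool
  | .bot => false
  | .var p => v (.var p)
  | .neg φ => !(evalP v φ)
  | .or φ ψ => evalP v φ || evalP v ψ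
  | .box φ => v (.box φ)

/-- propositional tautologies in the modal language -/
def Tautology (φ : Formula) : Prop := ∀ v, evalP v φ = true

/-- Provability in NA_{m,n} (ros = false) and NRA_{m,n} (ros = true):
    propositional tautologies, the scheme □^n φ → □^m φ, modus ponens,
    necessitation, and (if ros) the rule Ros^□ : ¬□φ / ¬□□φ. -/
inductive Prov (m n : ℕ) (ros : Bool) : Formula → Prop
  | taut {φ} : Tautology φ → Prov m n ros φ
  | axA (φ) : Prov m n ros ((Formula.boxn n φ).imp (Formula.boxn m φ))
  | mp {φ ψ} : Prov m n ros (φ.imp ψ) → Prov m n ros φ → Prov m n ros ψ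
  | nec {φ} : Prov m n ros φ → Prov m n ros (.box φ)
  | ros {φ} : ros = true → Prov m n ros (.neg (.box φ)) →
      Prov m n ros (.neg (.box (.box φ)))

/-- An N-frame on world set W: a binary relation R_φ for each formula φ. -/
abbrev NFrame (W : Type) := Formula → W → W → Prop

structure NModel (W : Type) where
  Rel : NFrame W
  V : W → ℕ → Prop

/-- satisfaction in an N-model -/
def Sat {W : Type} (M : NModel W) : W → Formula → Prop
  | _, .bot => False
  | w, .var p => M.V w p
  | w, .neg φ => ¬ Sat M w φ
  | w, .or φ ψ => Sat M w φ ∨ Sat M w ψ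
  | w, .box φ => ∀ w', M.Rel φ w w' → Sat M w' φ

/-- x R_φ^k y : there is a φ-path of length k from x to y -/
def FPath {W : Type} (R : NFrame W) (φ : Formula) : ℕ → W → W → Prop
  | 0, x, y => x = y
  | k+1, x, y => ∃ w, R (Formula.boxn k φ) x w ∧ FPath R φ k w y

/-- (m,n)-accessibility for φ -/
def AccFor {W : Type} (R : NFrame W) (m n : ℕ) (φ : Formula) : Prop :=
  ∀ x y, FPath R φ m x y → FPath R φ n x y

/-- Γ-(m,n)-accessibility -/
def SubAcc {W : Type} (R : NFrame W) (m n : ℕ) (Γ : Finset Formula) : Prop :=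
  ∀ φ, Formula.boxn m φ ∈ Γ → AccFor R m n φ

/-- (m,n)-accessibility -/
def Accessible {W : Type} (R : NFrame W) (m n : ℕ) : Prop :=
  ∀ φ, AccFor R m n φ

def ValidM {W : Type} (M : NModel W) (ψ : Formula) : Prop := ∀ w, Sat M w ψ

def ValidF {W : Type} (R : NFrame W) (ψ : Formula) : Prop :=
  ∀ V : W → ℕ → Prop, ValidM ⟨R, V⟩ ψ

/-!
NA_{m,n} is sound for (m,n)-accessible N-frames, since `□^k φ` holds at `w` exactly when `φ`
holds at the end of every `φ`-path of length `k` from `w`. When `m ≥ 1`, the frame with all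
relations empty has no path of length `m` and is therefore (m,n)-accessible; on it every `□ψ`
holds vacuously, so `¬□ψ` is not valid and hence not provable.
-/

variable {W : Type}

open Classical in
theorem sat_iff_evalP (M : NModel W) (w : W) (φ : Formula) :
    Sat M w φ ↔ evalP (fun χ => decide (Sat M w χ)) φ = true := by
  induction φ with
  | bot => simp [Sat, evalP]
  | var p => exact decide_eq_true_iff.symm
  | neg φ ih => simp [Sat, evalP, ih]
  | or φ ψ ih₁ ih₂ => simp [Sat, evalP, ih₁, ih₂]
  | box φ => simp [evalP]

theorem Tautology.sat {φ : Formula} (h : Tautology φ) (M : NModel W) (w : W) : Sat M w φ :=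
  (sat_iff_evalP M w φ).mpr (h _)

theorem sat_boxn_iff (M : NModel W) (φ : Formula) (k : ℕ) (x : W) :
    Sat M x (Formula.boxn k φ) ↔ ∀ y, FPath M.Rel φ k x y → Sat M y φ := by
  induction k generalizing x with
  | zero => simp [Formula.boxn, FPath]
  | succ k ih =>
    simp only [Formula.boxn, Sat, FPath, ih]
    exact ⟨fun h y ⟨w, hR, hpath⟩ => h w hR y hpath, fun h w hR y hpath => h y ⟨w, hR, hpath⟩⟩

theorem Prov.sound {m n : ℕ} {φ : Formula} (h : Prov m n false φ) (M : NModel W)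
    (hacc : Accessible M.Rel m n) : ValidM M φ := by
  induction h with
  | taut ht => exact ht.sat M
  | axA φ =>
    intro w
    show ¬ _ ∨ _
    rw [sat_boxn_iff, sat_boxn_iff, or_iff_not_imp_left, not_not]
    exact fun hn y hm => hn y (hacc φ w y hm)
  | mp _ _ ihImp ih => exact fun w => (ihImp w).resolve_left (not_not.mpr (ih w))
  | nec _ ih => exact fun w _ _ => ih _
  | ros hfalse => exact absurd hfalse Bool.false_ne_true

theorem accessible_empty {m : ℕ} (hm : 1 ≤ m) (n : ℕ) :
    Accessible (fun _ _ _ => False : NFrame W) m n := by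
  obtain ⟨k, rfl⟩ := Nat.exists_eq_add_of_le' hm
  intro φ x y ⟨_, hfalse, _⟩
  exact hfalse.elim

theorem stmt3 (m n : ℕ) (hm : 1 ≤ m) (ψ : Formula) :
    ¬ Prov m n false (.neg (.box ψ)) := by
  intro h
  let M : NModel Unit := ⟨fun _ _ _ => False, fun _ _ => False⟩
  have hnot_box : ¬ Sat M () (.box ψ) := h.sound M (accessible_empty hm n) ()
  exact hnot_box fun _ hfalse => hfalse.elim
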